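/- arXiv:0904.2863 — 7 statements merged into one kernel-verified Lean document; each statement's English description precedes it below -/
import Mathlib

section
/- A graph G that is sparse in ℝ^d (i.e., admits a drawing in ℝ^d with positive minimum node distance s > 0 and finite maximum connected range r < ∞) can be embedded in the h-fuzz Z_d^{(h)} of the d-dimensional integer lattice for some positive integer h; i.e., there is an injective map η: V → Z^d such that every edge (u,v) of G satisfies d_{Z_d}(η(u), η(v)) ≤ h. -/
/-- The d-dimensional square lattice: vertices are ℤ^d, with an edge between points
at (Euclidean, equivalently ℓ¹) distance 1. -/
def Zlat (d : ℕ) : SimpleGraph (Fin d → ℤ) where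
  Adj u v := ∑ i, |u i - v i| = 1
  symm := by
    constructor
    intro u v h
    simpa only [abs_sub_comm] using h
  loopless := by constructor; intro u; simp

/-!
Scale the drawing so that distinct vertices are more than `√d` apart, the diameter of a unit
cube, and send each vertex to the lattice corner of the unit cube containing it. Distinct
vertices then land in distinct cubes, while an edge of Euclidean length at most `R` moves each
rounded coordinate by at most `⌈R⌉`, hence has lattice (ℓ¹) distance at most `d ⌈R⌉`.
-/

theorem Int.abs_sub_sign_add_one {x : ℤ} (hx : x ≠ 0) : |x - x.sign| + 1 = |x| := by
  rcases hx.lt_or_gt with hneg | hpos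
  · rw [Int.sign_eq_neg_one_of_neg hneg, abs_eq_max_neg, abs_eq_max_neg]; omega
  · rw [Int.sign_eq_one_of_pos hpos, abs_eq_max_neg, abs_eq_max_neg]; omega

namespace Zlat

variable {d : ℕ}

theorem exists_adj_sum_abs_sub_add_one {u v : Fin d → ℤ} (huv : u ≠ v) :
    ∃ w, (Zlat d).Adj u w ∧ ∑ i, |w i - v i| + 1 = ∑ i, |u i - v i| := by
  obtain ⟨i, hi⟩ := Function.ne_iff.mp huv
  have hi' : u i - v i ≠ 0 := sub_ne_zero.mpr hi
  set w : Fin d → ℤ := u - Pi.single i (u i - v i).sign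
  refine ⟨w, ?_, ?_⟩
  · have hterm : ∀ j, |u j - w j| = (Pi.single i 1 : Fin d → ℤ) j := by
      intro j
      rcases eq_or_ne j i with rfl | hj
      · simpa [w] using Int.abs_sign_of_ne_zero hi'
      · simp [w, hj]
    change ∑ j, |u j - w j| = 1
    simp only [hterm, Finset.sum_pi_single', Finset.mem_univ, if_true]
  · have hterm : ∀ j, |w j - v j| + (Pi.single i 1 : Fin d → ℤ) j = |u j - v j| := by
      intro j
      rcases eq_or_ne j i with rfl | hj
      · simpa [w, sub_right_comm] using Int.abs_sub_sign_add_one hi'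
      · simp [w, hj]
    simp only [← hterm, Finset.sum_add_distrib, Finset.sum_pi_single', Finset.mem_univ, if_true]

theorem exists_walk_length_eq (n : ℕ) :
    ∀ u v : Fin d → ℤ, ∑ i, |u i - v i| = n → ∃ p : (Zlat d).Walk u v, p.length = n := by
  induction n with
  | zero =>
    intro u v h
    obtain rfl : u = v := funext fun i => by
      have := (Finset.sum_eq_zero_iff_of_nonneg fun j _ => abs_nonneg (u j - v j)).mp h i
      simpa [sub_eq_zero] using this
    exact ⟨.nil, rfl⟩
  | succ n ih =>
    intro u v h
    have huv : u ≠ v := by rintro rfl; simp at h; omega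
    obtain ⟨w, huw, hw⟩ := exists_adj_sum_abs_sub_add_one huv
    obtain ⟨p, hp⟩ := ih w v (by omega)
    exact ⟨.cons huw p, by simp [hp]⟩

theorem dist_le_sum_abs_sub (u v : Fin d → ℤ) :
    ((Zlat d).dist u v : ℤ) ≤ ∑ i, |u i - v i| := by
  have hsum : ∑ i, |u i - v i| = (∑ i, |u i - v i|).toNat :=
    (Int.toNat_of_nonneg (Finset.sum_nonneg fun i _ => abs_nonneg _)).symm
  obtain ⟨p, hp⟩ := exists_walk_length_eq _ u v hsum
  rw [hsum, ← hp]
  exact_mod_cast SimpleGraph.dist_le p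

end Zlat

theorem Int.abs_floor_sub_floor_lt {R : Type*} [CommRing R] [LinearOrder R] [IsStrictOrderedRing R]
    [FloorRing R] (a b : R) : ((|⌊a⌋ - ⌊b⌋| : ℤ) : R) < |a - b| + 1 := by
  rw [Int.cast_abs, Int.cast_sub, abs_sub_lt_iff]
  constructor
  · linarith [le_abs_self (a - b), Int.floor_le a, Int.lt_floor_add_one b]
  · linarith [neg_abs_le (a - b), Int.floor_le b, Int.lt_floor_add_one a]

section LatticeFloor

variable {d : ℕ}

noncomputable def latticeFloor (x : EuclideanSpace ℝ (Fin d)) : Fin d → ℤ := fun i => ⌊x i⌋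

theorem dist_le_sqrt_of_latticeFloor_eq {x y : EuclideanSpace ℝ (Fin d)}
    (h : latticeFloor x = latticeFloor y) : dist x y ≤ √d := by
  have hcoord : ∀ i, dist (x i) (y i) ^ 2 ≤ 1 := fun i =>
    pow_le_one₀ dist_nonneg (Int.abs_sub_lt_one_of_floor_eq_floor (congrFun h i)).le
  calc dist x y = √(∑ i, dist (x i) (y i) ^ 2) := EuclideanSpace.dist_eq x y
    _ ≤ √(∑ _i : Fin d, 1) := Real.sqrt_le_sqrt (Finset.sum_le_sum fun i _ => hcoord i)
    _ = √d := by simp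

theorem Zlat.dist_latticeFloor_le (x y : EuclideanSpace ℝ (Fin d)) :
    (Zlat d).dist (latticeFloor x) (latticeFloor y) ≤ d * ⌈dist x y⌉₊ := by
  have hcoord : ∀ i, |latticeFloor x i - latticeFloor y i| ≤ (⌈dist x y⌉₊ : ℤ) := by
    intro i
    have hlt : ((|latticeFloor x i - latticeFloor y i| : ℤ) : ℝ) < ⌈dist x y⌉₊ + 1 :=
      calc _ < |x i - y i| + 1 := Int.abs_floor_sub_floor_lt (x i) (y i)
        _ ≤ dist x y + 1 := by gcongr; exact PiLp.dist_apply_le x y i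
        _ ≤ ⌈dist x y⌉₊ + 1 := by gcongr; exact Nat.le_ceil _
    exact Int.lt_add_one_iff.mp (by exact_mod_cast hlt)
  have hsum := (Zlat.dist_le_sum_abs_sub _ _).trans (Finset.sum_le_sum fun i _ => hcoord i)
  simp only [Finset.sum_const, Finset.card_univ, Fintype.card_fin, nsmul_eq_mul] at hsum
  exact_mod_cast hsum

end LatticeFloor

/-- If G is sparse in ℝ^d, i.e. has a civilized drawing f (minimum node
distance s > 0 and maximum connected range at most r < ∞), then G embeds in the
h-fuzz of the lattice Z_d for some positive integer h: there is an injection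
η : V → ℤ^d with d_{Z_d}(η u, η v) ≤ h for every edge (u,v) of G. -/
theorem sparse_embeds_in_lattice_fuzz {V : Type*} {d : ℕ}
    (G : SimpleGraph V) (f : V → EuclideanSpace ℝ (Fin d))
    (s r : ℝ) (hs : 0 < s)
    (hmin : ∀ u v : V, u ≠ v → s ≤ dist (f u) (f v))
    (hr : ∀ u v : V, G.Adj u v → dist (f u) (f v) ≤ r) :
    ∃ h : ℕ, 0 < h ∧ ∃ η : V → (Fin d → ℤ), Function.Injective η ∧
      ∀ u v : V, G.Adj u v → (Zlat d).dist (η u) (η v) ≤ h := by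
  set c : ℝ := (√d + 1) / s
  have hc : 0 < c := by positivity
  have hdist : ∀ u v, dist (c • f u) (c • f v) = c * dist (f u) (f v) := fun u v => by
    rw [dist_smul₀, Real.norm_of_nonneg hc.le]
  refine ⟨d * ⌈c * r⌉₊ + 1, Nat.succ_pos _, fun u => latticeFloor (c • f u), ?_, ?_⟩
  · intro u v huv
    by_contra hne
    have hfar : √d < dist (c • f u) (c • f v) := by
      calc √d < c * s := by simp only [c, div_mul_cancel₀ _ hs.ne']; linarith
        _ ≤ _ := (hdist u v).symm ▸ mul_le_mul_of_nonneg_left (hmin u v hne) hc.le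
    exact hfar.not_ge (dist_le_sqrt_of_latticeFloor_eq huv)
  · intro u v huv
    calc (Zlat d).dist _ _ ≤ d * ⌈dist (c • f u) (c • f v)⌉₊ := Zlat.dist_latticeFloor_le _ _
      _ ≤ d * ⌈c * r⌉₊ := by
          gcongr
          rw [hdist]
          exact mul_le_mul_of_nonneg_left (hr u v huv) hc.le
      _ ≤ _ := Nat.le_succ _
end

section
/- The 2-dimensional lattice Z_2 is not sparse in ℝ: there is no drawing f: ℤ² → ℝ with minimum node distance s > 0 and finite maximum connected range r < ∞. -/
open Finset

theorem Finset.card_le_div_add_one_of_separated {ι : Type*} (t : Finset ι) (f : ι → ℝ)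
    {s a b : ℝ} (hs : 0 < s) (hab : a ≤ b) (hsep : ∀ x ∈ t, ∀ y ∈ t, x ≠ y → s ≤ |f x - f y|)
    (hf : ∀ x ∈ t, f x ∈ Set.Icc a b) : (#t : ℝ) ≤ (b - a) / s + 1 := by
  let bucket : ι → ℕ := fun x => ⌊(f x - a) / s⌋₊
  have hmaps : ∀ x ∈ t, bucket x ∈ range (⌊(b - a) / s⌋₊ + 1) := by
    intro x hx
    exact mem_range_succ_iff.mpr (Nat.floor_le_floor (by gcongr; exact (hf x hx).2))
  have hinj : Set.InjOn bucket t := by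
    intro x hx y hy hxy
    by_contra hne
    have hnonneg : ∀ z ∈ t, 0 ≤ (f z - a) / s := fun z hz =>
      div_nonneg (sub_nonneg.mpr (hf z hz).1) hs.le
    have hclose : |(f x - a) / s - (f y - a) / s| < 1 := by
      apply Int.abs_sub_lt_one_of_floor_eq_floor
      rw [← Int.natCast_floor_eq_floor (hnonneg x hx), ← Int.natCast_floor_eq_floor (hnonneg y hy)]
      exact congrArg _ hxy
    rw [← sub_div, abs_div, abs_of_pos hs, div_lt_one hs, sub_sub_sub_cancel_right] at hclose
    exact (hsep x hx y hy hne).not_gt hclose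
  calc (#t : ℝ) ≤ ⌊(b - a) / s⌋₊ + 1 := by
        exact_mod_cast (card_le_card_of_injOn bucket hmaps hinj).trans (card_range _).le
    _ ≤ (b - a) / s + 1 := by
        gcongr
        exact Nat.floor_le (div_nonneg (sub_nonneg.mpr hab) hs.le)

namespace Zlat

variable {d : ℕ}

theorem adj_add_single_one (u : Fin d → ℤ) (i : Fin d) : (Zlat d).Adj (u + Pi.single i 1) u := by
  simp [Zlat, Pi.single_apply, apply_ite (fun x : ℤ => |x|)]

section EdgeBounded

variable {f : (Fin d → ℤ) → ℝ} {r : ℝ} (hr : ∀ u v, (Zlat d).Adj u v → |f u - f v| ≤ r)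
include hr

theorem abs_add_single_natCast_sub_le (u : Fin d → ℤ) (i : Fin d) (k : ℕ) :
    |f (u + Pi.single i (k : ℤ)) - f u| ≤ k * r := by
  induction k with
  | zero => simp
  | succ k ih =>
    have hstep := hr _ _ (adj_add_single_one (u + Pi.single i (k : ℤ)) i)
    rw [add_assoc, ← Pi.single_add] at hstep
    calc |f (u + Pi.single i ((k + 1 : ℕ) : ℤ)) - f u|
        ≤ |f (u + Pi.single i ((k : ℤ) + 1)) - f (u + Pi.single i (k : ℤ))|
          + |f (u + Pi.single i (k : ℤ)) - f u| := by push_cast; exact abs_sub_le _ _ _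
      _ ≤ r + k * r := add_le_add hstep ih
      _ = (k + 1 : ℕ) * r := by push_cast; ring

theorem abs_add_single_sub_le (u : Fin d → ℤ) (i : Fin d) (k : ℤ) :
    |f (u + Pi.single i k) - f u| ≤ (|k| : ℤ) * r := by
  obtain ⟨n, rfl | rfl⟩ := k.eq_nat_or_neg
  · simpa using abs_add_single_natCast_sub_le hr u i n
  · have h := abs_add_single_natCast_sub_le hr (u + Pi.single i (-n : ℤ)) i n
    rw [add_assoc, ← Pi.single_add, neg_add_cancel, Pi.single_zero, add_zero, abs_sub_comm] at h
    simpa using h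

theorem abs_sub_le_mul_sum_abs_sub (u v : Fin d → ℤ) :
    |f u - f v| ≤ r * (∑ i, |u i - v i| : ℤ) := by
  have hpartial : ∀ S : Finset (Fin d),
      |f (v + ∑ i ∈ S, Pi.single i ((u - v) i)) - f v| ≤ r * (∑ i ∈ S, |(u - v) i| : ℤ) := by
    intro S
    induction S using Finset.induction_on with
    | empty => simp
    | insert j S hj ih =>
      rw [sum_insert hj, sum_insert hj, add_comm (Pi.single j _), ← add_assoc]
      calc _ ≤ |f (v + ∑ i ∈ S, Pi.single i ((u - v) i) + Pi.single j ((u - v) j))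
              - f (v + ∑ i ∈ S, Pi.single i ((u - v) i))|
            + |f (v + ∑ i ∈ S, Pi.single i ((u - v) i)) - f v| := abs_sub_le _ _ _
        _ ≤ |(u - v) j| * r + r * (∑ i ∈ S, |(u - v) i| : ℤ) :=
            add_le_add (abs_add_single_sub_le hr _ _ _) ih
        _ = _ := by push_cast; ring
  have hfull := hpartial univ
  rwa [Finset.univ_sum_single, add_sub_cancel] at hfull

end EdgeBounded

variable {f : (Fin d → ℤ) → ℝ} {s r : ℝ}

theorem natCast_add_one_pow_le (hs : 0 < s) (hsep : ∀ u v, u ≠ v → s ≤ |f u - f v|)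
    (hr : ∀ u v, (Zlat d).Adj u v → |f u - f v| ≤ r) (hr0 : 0 ≤ r) (n : ℕ) :
    ((n : ℝ) + 1) ^ d ≤ 2 * d * n * r / s + 1 := by
  let box := Fintype.piFinset fun _ : Fin d => Icc (0 : ℤ) n
  have hcard : #box = (n + 1) ^ d := by simp [box]
  have hdist : ∀ u ∈ box, |f u - f 0| ≤ d * n * r := by
    intro u hu
    have hl1 : ∑ i, |u i - 0| ≤ ∑ _i : Fin d, (n : ℤ) := by
      gcongr with i
      obtain ⟨hu0, hun⟩ := mem_Icc.mp (Fintype.mem_piFinset.mp hu i)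
      rwa [sub_zero, abs_of_nonneg hu0]
    calc |f u - f 0| ≤ r * (∑ i, |u i - 0| : ℤ) := abs_sub_le_mul_sum_abs_sub hr u 0
      _ ≤ r * (∑ _i : Fin d, (n : ℤ) : ℤ) := by gcongr
      _ = d * n * r := by rw [sum_const, card_univ, Fintype.card_fin, nsmul_eq_mul]; push_cast; ring
  have hcount := box.card_le_div_add_one_of_separated f hs (a := f 0 - d * n * r) (b := f 0 + d * n * r)
    (by have := mul_nonneg (mul_nonneg d.cast_nonneg n.cast_nonneg) hr0; linarith)
    (fun u _ v _ huv => hsep u v huv)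
    (fun u hu => by have := abs_le.mp (hdist u hu); constructor <;> linarith)
  rw [hcard] at hcount
  convert hcount using 2 <;> push_cast <;> ring

theorem not_sparse_in_R (hd : 2 ≤ d) :
    ¬ ∃ f : (Fin d → ℤ) → ℝ,
      (∃ s : ℝ, 0 < s ∧ ∀ u v : Fin d → ℤ, u ≠ v → s ≤ |f u - f v|) ∧
      (∃ r : ℝ, ∀ u v : Fin d → ℤ, (Zlat d).Adj u v → |f u - f v| ≤ r) := by
  rintro ⟨f, ⟨s, hs, hsep⟩, ⟨r, hr⟩⟩
  have hr0 : 0 ≤ r := (abs_nonneg _).trans (hr _ _ (adj_add_single_one 0 ⟨0, by omega⟩))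
  set n : ℕ := ⌈2 * d * r / s⌉₊ + 1
  have hn : 2 * d * r / s ≤ n - 1 := by simpa [n] using Nat.le_ceil (2 * d * r / s)
  have hn1 : (1 : ℝ) ≤ n := by simp [n]
  have hgrowth : ((n : ℝ) + 1) ^ 2 ≤ ((n : ℝ) + 1) ^ d :=
    pow_le_pow_right₀ (by linarith) hd
  have hlinear : 2 * d * n * r / s ≤ n * (n - 1) :=
    calc 2 * d * n * r / s = n * (2 * d * r / s) := by ring
      _ ≤ n * (n - 1) := by gcongr
  nlinarith [natCast_add_one_pow_le hs hsep hr hr0 n]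

end Zlat

/-- The 2-dimensional lattice Z₂ is not sparse in ℝ: there is no drawing
f : ℤ² → ℝ with positive minimum node distance and finite maximum connected range. -/
theorem Zlat_two_not_sparse_in_R :
    ¬ ∃ f : (Fin 2 → ℤ) → ℝ,
      (∃ s : ℝ, 0 < s ∧ ∀ u v : Fin 2 → ℤ, u ≠ v → s ≤ |f u - f v|) ∧
      (∃ r : ℝ, ∀ u v : Fin 2 → ℤ, (Zlat 2).Adj u v → |f u - f v| ≤ r) :=
  Zlat.not_sparse_in_R le_rfl
end

section
/- The 2-dimensional lattice Z_2 is not dense in ℝ³: there is no drawing f: ℤ² → ℝ³ with finite maximum uncovered diameter γ < ∞ and positive asymptotic distance ratio ρ > 0 (equivalently, no drawing satisfying both: every open ball of some fixed diameter in ℝ³ contains the image of a node, and d_{Z_2}(u,v) ≤ α‖f(u)−f(v)‖ + β for some constants α, β > 0). -/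
/-!
The points `f 0 + γ • k`, `k ∈ ℤ³`, are `γ`-separated, so the nodes `u k` whose images lie within
`γ / 2` of them are pairwise distinct. The distance bound puts `u k` in a box of side `O(M)` of `ℤ²`
whenever `k` lies in the box of side `M` of `ℤ³`, and `(2M + 1)³` points cannot fit injectively into
`O(M²)` points once `M` is large.
-/

open Function Finset

namespace Zlat

variable {d : ℕ}

lemma adj_iff {u v : Fin d → ℤ} : (Zlat d).Adj u v ↔ ∑ i, |u i - v i| = 1 := Iff.rfl

lemma adj_add_single (u : Fin d → ℤ) (i : Fin d) {ε : ℤ} (hε : |ε| = 1) :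
    (Zlat d).Adj u (u + Pi.single i ε) := by
  simp [adj_iff, Pi.single_apply, apply_ite, hε]

lemma reachable_add_single (u : Fin d → ℤ) (i : Fin d) (n : ℤ) :
    (Zlat d).Reachable u (u + Pi.single i n) := by
  induction n using Int.induction_on with
  | zero => simp
  | succ n ih =>
    rw [Pi.single_add, ← add_assoc]
    exact ih.trans (adj_add_single _ i abs_one).reachable
  | pred n ih =>
    rw [sub_eq_add_neg, Pi.single_add, ← add_assoc]
    exact ih.trans (adj_add_single _ i (by norm_num)).reachable

lemma preconnected : (Zlat d).Preconnected := by
  intro u v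
  have hpartial (s : Finset (Fin d)) :
      (Zlat d).Reachable u (u + ∑ i ∈ s, Pi.single i (v i - u i)) := by
    induction s using Finset.induction_on with
    | empty => simp
    | insert a s ha ih =>
      rw [sum_insert ha, add_comm (Pi.single a _), ← add_assoc]
      exact ih.trans (reachable_add_single _ a _)
  convert hpartial univ
  ext i
  simp [univ_sum_single]

lemma abs_sub_le_one_of_adj {u v : Fin d → ℤ} (h : (Zlat d).Adj u v) (i : Fin d) :
    |u i - v i| ≤ 1 :=
  h ▸ single_le_sum (f := fun j ↦ |u j - v j|) (fun _ _ ↦ abs_nonneg _) (mem_univ i)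

lemma abs_sub_le_length {u v : Fin d → ℤ} (w : (Zlat d).Walk u v) (i : Fin d) :
    |u i - v i| ≤ w.length := by
  induction w with
  | nil => simp
  | @cons a b c h p ih =>
    calc |a i - c i| ≤ |a i - b i| + |b i - c i| := abs_sub_le _ _ _
      _ ≤ 1 + p.length := add_le_add (abs_sub_le_one_of_adj h i) ih
      _ = (p.cons h).length := by push_cast [SimpleGraph.Walk.length_cons]; ring

lemma abs_sub_le_dist (u v : Fin d → ℤ) (i : Fin d) : |u i - v i| ≤ (Zlat d).dist u v := by
  obtain ⟨w, hw⟩ := (preconnected u v).exists_walk_length_eq_dist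
  exact hw ▸ abs_sub_le_length w i

end Zlat

noncomputable def intBox (m M : ℕ) : Finset (Fin m → ℤ) :=
  Fintype.piFinset fun _ ↦ Icc (-(M : ℤ)) M

lemma mem_intBox {m M : ℕ} {k : Fin m → ℤ} : k ∈ intBox m M ↔ ∀ i, |k i| ≤ M := by
  simp only [intBox, Fintype.mem_piFinset, mem_Icc, abs_le]

lemma card_intBox (m M : ℕ) : #(intBox m M) = (2 * M + 1) ^ m := by
  simp only [intBox, Fintype.card_piFinset, Int.card_Icc, prod_const, card_univ, Fintype.card_fin]
  congr 1
  omega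

lemma exists_pow_lt_pow_of_lt {m n : ℕ} (hnm : n < m) (a b : ℕ) :
    ∃ M : ℕ, (2 * (a * M + b) + 1) ^ n < (2 * M + 1) ^ m := by
  set c := a + 2 * b + 1
  refine ⟨c ^ n, ?_⟩
  have hlin : 2 * (a * c ^ n + b) + 1 ≤ c * (2 * c ^ n + 1) := by
    generalize c ^ n = t
    simp only [c]
    nlinarith
  calc (2 * (a * c ^ n + b) + 1) ^ n ≤ (c * (2 * c ^ n + 1)) ^ n := Nat.pow_le_pow_left hlin n
    _ = c ^ n * (2 * c ^ n + 1) ^ n := mul_pow _ _ _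
    _ < (2 * c ^ n + 1) * (2 * c ^ n + 1) ^ n := by gcongr; omega
    _ = (2 * c ^ n + 1) ^ (n + 1) := (pow_succ' _ _).symm
    _ ≤ (2 * c ^ n + 1) ^ m := Nat.pow_le_pow_right (by omega) hnm

theorem not_injective_of_abs_le_linear {m n : ℕ} (hnm : n < m) (a b : ℕ)
    (g : (Fin m → ℤ) → Fin n → ℤ)
    (hg : ∀ (M : ℕ) (k : Fin m → ℤ), (∀ i, |k i| ≤ M) → ∀ j, |g k j| ≤ a * M + b) :
    ¬ Injective g := by
  intro hinj
  obtain ⟨M, hM⟩ := exists_pow_lt_pow_of_lt hnm a b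
  have hmaps : ∀ k ∈ intBox m M, g k ∈ intBox n (a * M + b) := by
    intro k hk
    rw [mem_intBox] at hk ⊢
    exact_mod_cast hg M k hk
  have hcard := card_le_card_of_injOn g hmaps hinj.injOn
  rw [card_intBox, card_intBox] at hcard
  exact hcard.not_gt hM

lemma injective_of_dist_lt_half {ι X : Type*} [PseudoMetricSpace X] {x y : ι → X} {γ : ℝ}
    (hx : Pairwise fun k l ↦ γ ≤ dist (x k) (x l)) (hy : ∀ k, dist (y k) (x k) < γ / 2) :
    Injective y := by
  intro k l hkl
  by_contra hne
  have : dist (x k) (x l) < γ :=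
    calc dist (x k) (x l) ≤ dist (y k) (x k) + dist (y l) (x l) := by
          rw [dist_comm (y k), hkl]; exact dist_triangle _ _ _
      _ < γ / 2 + γ / 2 := add_lt_add (hy k) (hy l)
      _ = γ := add_halves γ
  exact (hx hne).not_gt this

lemma EuclideanSpace.norm_le_sum_norm {ι : Type*} [Fintype ι] (x : EuclideanSpace ℝ ι) :
    ‖x‖ ≤ ∑ i, ‖x i‖ := by
  rw [EuclideanSpace.norm_eq]
  exact Real.sqrt_le_iff.mpr ⟨by positivity, sum_sq_le_sq_sum_of_nonneg fun _ _ ↦ norm_nonneg _⟩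

section latticePoint

variable {ι : Type*} [Fintype ι]

def latticePoint (k : ι → ℤ) : EuclideanSpace ℝ ι :=
  WithLp.toLp 2 fun i ↦ (k i : ℝ)

lemma one_le_dist_latticePoint {k l : ι → ℤ} (hkl : k ≠ l) :
    1 ≤ dist (latticePoint k) (latticePoint l) := by
  obtain ⟨i, hi⟩ := Function.ne_iff.mp hkl
  calc (1 : ℝ) ≤ |((k i - l i : ℤ) : ℝ)| := by exact_mod_cast Int.one_le_abs (sub_ne_zero.mpr hi)
    _ = dist (latticePoint k i) (latticePoint l i) := by simp [latticePoint, Real.dist_eq]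
    _ ≤ dist (latticePoint k) (latticePoint l) := PiLp.dist_apply_le _ _ i

lemma norm_latticePoint_le {k : ι → ℤ} {M : ℕ} (hk : ∀ i, |k i| ≤ M) :
    ‖latticePoint k‖ ≤ Fintype.card ι * M :=
  calc ‖latticePoint k‖ ≤ ∑ i, ‖latticePoint k i‖ := EuclideanSpace.norm_le_sum_norm _
    _ ≤ ∑ _i : ι, (M : ℝ) := sum_le_sum fun i _ ↦ by
          simpa [latticePoint, Real.norm_eq_abs] using (Int.cast_le (R := ℝ)).mpr (hk i)
    _ = Fintype.card ι * M := by simp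

end latticePoint

/-- The 2-dimensional lattice Z₂ is not dense in ℝ³: there is no drawing
f : ℤ² → ℝ³ with finite maximum uncovered diameter γ (every open ball of diameter γ
contains the image of a node) and positive asymptotic distance ratio (equivalently,
d_{Z₂}(u,v) ≤ α·‖f u − f v‖ + β for some constants α, β > 0). -/
theorem Zlat_two_not_dense_in_R3 :
    ¬ ∃ f : (Fin 2 → ℤ) → EuclideanSpace ℝ (Fin 3),
      (∃ γ : ℝ, 0 < γ ∧ ∀ x : EuclideanSpace ℝ (Fin 3),
        ∃ u : Fin 2 → ℤ, dist (f u) x < γ / 2) ∧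
      (∃ α β : ℝ, 0 < α ∧ 0 < β ∧ ∀ u v : Fin 2 → ℤ,
        ((Zlat 2).dist u v : ℝ) ≤ α * dist (f u) (f v) + β) := by
  rintro ⟨f, ⟨γ, hγ, hcover⟩, α, β, hα, -, hdist⟩
  set x : (Fin 3 → ℤ) → EuclideanSpace ℝ (Fin 3) := fun k ↦ f 0 + γ • latticePoint k
  choose u hu using fun k ↦ hcover (x k)
  have hsep : Pairwise fun k l ↦ γ ≤ dist (x k) (x l) := fun k l hkl ↦ by
    simp only [x]
    rw [dist_add_left, dist_smul₀, Real.norm_of_nonneg hγ.le]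
    exact le_mul_of_one_le_right hγ.le (one_le_dist_latticePoint hkl)
  have hinj : Injective u := (injective_of_dist_lt_half (y := f ∘ u) hsep hu).of_comp
  refine not_injective_of_abs_le_linear (by norm_num) ⌈3 * α * γ⌉₊ ⌈α * γ / 2 + β⌉₊ u
    (fun M k hk j ↦ ?_) hinj
  have hfar : dist (f (u k)) (f 0) ≤ γ / 2 + γ * (3 * M) :=
    calc dist (f (u k)) (f 0) ≤ dist (f (u k)) (x k) + dist (x k) (f 0) := dist_triangle _ _ _
      _ ≤ γ / 2 + γ * (3 * M) := by
        refine add_le_add (hu k).le ?_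
        rw [dist_self_add_left, norm_smul, Real.norm_of_nonneg hγ.le]
        simpa using mul_le_mul_of_nonneg_left (norm_latticePoint_le hk) hγ.le
  have : (|u k j| : ℝ) ≤ ⌈3 * α * γ⌉₊ * M + ⌈α * γ / 2 + β⌉₊ :=
    calc (|u k j| : ℝ) ≤ (Zlat 2).dist (u k) 0 := by
          exact_mod_cast sub_zero (u k j) ▸ Zlat.abs_sub_le_dist (u k) 0 j
      _ ≤ α * dist (f (u k)) (f 0) + β := hdist _ _
      _ ≤ α * (γ / 2 + γ * (3 * M)) + β := by gcongr
      _ = 3 * α * γ * M + (α * γ / 2 + β) := by ring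
      _ ≤ ⌈3 * α * γ⌉₊ * M + ⌈α * γ / 2 + β⌉₊ := by gcongr <;> exact Nat.le_ceil _
  exact_mod_cast this
end

section
/- Matrix-valued effective resistance satisfies the triangle inequality: in a finite connected generalized electrical network (G, R₀) with the same symmetric positive definite k×k resistance R₀ on every edge, for every triple of nodes u, v, w, R^eff_{u,w} ≤ R^eff_{u,v} + R^eff_{v,w} in the Loewner (positive semidefinite) order. -/
/-!
Fix `x` and apply the unit currents from `u` to `v`, from `v` to `w` and from `u` to `w` to `x`;
this gives vector-valued currents with potentials `P₁`, `P₂`, `P₃`. The first two minus the third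
is a current without sources, so by Tellegen's energy identity its potential is constant.
Reciprocity gives `x ⬝ᵥ (P₁ v - P₁ w) = x ⬝ᵥ (P₂ u - P₂ v)`, and together these turn the quadratic
form of `Ruv + Rvw - Ruw` at `x` into `2 x ⬝ᵥ (P₂ v - P₂ u)`. This is nonnegative by the maximum
principle: since the resistance is the same on every edge, `R₀` can be pulled out of Kirchhoff's
sum, so `a ↦ x ⬝ᵥ P₂ a` is subharmonic away from the source `v`.
-/

open Finset in
/-- `Reff` is the generalized (matrix-valued) effective resistance between `u` and `v`
in the generalized electrical network `(G, R)`: for every intensity `J` there is a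
matrix-valued current `i` (antisymmetric, supported on edges, satisfying the matrix
Kirchhoff current law with net outflow `J` at `u`, `−J` at `v`, `0` elsewhere) and a
matrix-valued potential `p` satisfying Ohm's law `R_e i_e = p_a − p_b` on each edge,
with `p_u − p_v = Reff · J`. -/
def IsEffRes {V : Type*} [Fintype V] [DecidableEq V] {k : ℕ} (G : SimpleGraph V)
    (R : V → V → Matrix (Fin k) (Fin k) ℝ) (u v : V)
    (Reff : Matrix (Fin k) (Fin k) ℝ) : Prop :=
  ∀ J : Matrix (Fin k) (Fin k) ℝ,
    ∃ i : V → V → Matrix (Fin k) (Fin k) ℝ, ∃ p : V → Matrix (Fin k) (Fin k) ℝ,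
      (∀ a b, i b a = - i a b) ∧
      (∀ a b, ¬ G.Adj a b → i a b = 0) ∧
      (∀ a, ∑ b, i a b = (if a = u then J else 0) - (if a = v then J else 0)) ∧
      (∀ a b, G.Adj a b → R a b * i a b = p a - p b) ∧
      p u - p v = Reff * J

open Finset Matrix

namespace SimpleGraph

variable {V : Type*} {G : SimpleGraph V}

theorem Reachable.of_adj_imp {p : V → Prop} (hp : ∀ a b, G.Adj a b → p a → p b) {a b : V}
    (h : G.Reachable a b) (ha : p a) : p b := by
  obtain ⟨w⟩ := h
  induction w with
  | nil => exact ha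
  | cons hadj _ ih => exact ih (hp _ _ hadj ha)

theorem Preconnected.le_of_sum_sub_nonpos [Fintype V] [DecidableRel G.Adj] (hG : G.Preconnected)
    {φ : V → ℝ} {v : V} (h : ∀ a ≠ v, ∑ b ∈ G.neighborFinset a, (φ a - φ b) ≤ 0) (a : V) :
    φ a ≤ φ v := by
  have : Nonempty V := ⟨v⟩
  obtain ⟨a₀, ha₀⟩ := Finite.exists_max φ
  by_contra hlt
  have hv : φ v ≠ φ a₀ := fun hv => hlt (hv ▸ ha₀ a)
  have hmax : ∀ b c, G.Adj b c → φ b = φ a₀ → φ c = φ a₀ := by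
    intro b c hbc hb
    have hb_ne : b ≠ v := by rintro rfl; exact hv hb
    have hnonneg : ∀ c ∈ G.neighborFinset b, 0 ≤ φ b - φ c := fun c _ => hb ▸ sub_nonneg.2 (ha₀ c)
    have hzero := (sum_eq_zero_iff_of_nonneg hnonneg).1
      (le_antisymm (h b hb_ne) (sum_nonneg hnonneg))
    linarith [hzero c ((mem_neighborFinset G b c).2 hbc)]
  exact hv ((hG a₀ v).of_adj_imp hmax rfl)

end SimpleGraph

theorem sum_sum_dotProduct_sub_of_antisymm {V n α : Type*} [Fintype V] [Fintype n] [CommRing α]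
    (F : V → V → n → α) (hF : ∀ a b, F b a = -F a b) (P : V → n → α) :
    ∑ a, ∑ b, F a b ⬝ᵥ (P a - P b) = 2 * ∑ a, (∑ b, F a b) ⬝ᵥ P a := by
  have hswap : ∑ a, ∑ b, F a b ⬝ᵥ P b = -∑ a, (∑ b, F a b) ⬝ᵥ P a := by
    rw [sum_comm, ← sum_neg_distrib]
    refine sum_congr rfl fun a _ => ?_
    simp only [hF a, neg_dotProduct, sum_neg_distrib, sum_dotProduct]
  simp only [dotProduct_sub, sum_sub_distrib, hswap, sum_dotProduct]
  ring

section

variable {V n : Type*} [Fintype V] [Fintype n]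

structure IsCurrent (G : SimpleGraph V) (R : V → V → Matrix n n ℝ) (s : V → n → ℝ)
    (I : V → V → n → ℝ) (P : V → n → ℝ) : Prop where
  antisymm : ∀ a b, I b a = -I a b
  eq_zero_of_not_adj : ∀ a b, ¬G.Adj a b → I a b = 0
  sum_eq : ∀ a, ∑ b, I a b = s a
  ohm : ∀ a b, G.Adj a b → R a b *ᵥ I a b = P a - P b

namespace IsCurrent

variable {G : SimpleGraph V} {R : V → V → Matrix n n ℝ} {s t : V → n → ℝ}
  {I J : V → V → n → ℝ} {P Q : V → n → ℝ}

theorem add (hI : IsCurrent G R s I P) (hJ : IsCurrent G R t J Q) :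
    IsCurrent G R (s + t) (I + J) (P + Q) where
  antisymm a b := by simp [hI.antisymm a b, hJ.antisymm a b, add_comm]
  eq_zero_of_not_adj a b h := by simp [hI.eq_zero_of_not_adj a b h, hJ.eq_zero_of_not_adj a b h]
  sum_eq a := by simp [sum_add_distrib, hI.sum_eq a, hJ.sum_eq a]
  ohm a b h := by simp only [Pi.add_apply, mulVec_add, hI.ohm a b h, hJ.ohm a b h]; abel

theorem sub (hI : IsCurrent G R s I P) (hJ : IsCurrent G R t J Q) :
    IsCurrent G R (s - t) (I - J) (P - Q) where
  antisymm a b := by simp only [Pi.sub_apply, hI.antisymm a b, hJ.antisymm a b]; abel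
  eq_zero_of_not_adj a b h := by simp [hI.eq_zero_of_not_adj a b h, hJ.eq_zero_of_not_adj a b h]
  sum_eq a := by simp [sum_sub_distrib, hI.sum_eq a, hJ.sum_eq a]
  ohm a b h := by simp only [Pi.sub_apply, mulVec_sub, hI.ohm a b h, hJ.ohm a b h]; abel

theorem tellegen (hI : IsCurrent G R s I P) (hJ : IsCurrent G R t J Q) :
    ∑ a, ∑ b, J a b ⬝ᵥ (R a b *ᵥ I a b) = 2 * ∑ a, t a ⬝ᵥ P a := by
  have hedge : ∀ a b, J a b ⬝ᵥ (R a b *ᵥ I a b) = J a b ⬝ᵥ (P a - P b) := by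
    intro a b
    by_cases h : G.Adj a b
    · rw [hI.ohm a b h]
    · simp [hJ.eq_zero_of_not_adj a b h]
  simp only [hedge, sum_sum_dotProduct_sub_of_antisymm J hJ.antisymm, hJ.sum_eq]

theorem reciprocity (hI : IsCurrent G R s I P) (hJ : IsCurrent G R t J Q)
    (hR : ∀ a b, (R a b).IsHermitian) : ∑ a, t a ⬝ᵥ P a = ∑ a, s a ⬝ᵥ Q a := by
  have hsymm : ∀ a b, J a b ⬝ᵥ (R a b *ᵥ I a b) = I a b ⬝ᵥ (R a b *ᵥ J a b) := by
    intro a b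
    rw [dotProduct_mulVec, ← vecMul_transpose, ← conjTranspose_eq_transpose_of_trivial, hR a b,
      dotProduct_comm]
  have := hI.tellegen hJ
  simp only [hsymm, hJ.tellegen hI] at this
  linarith

theorem potential_eq_of_source_eq_zero (hI : IsCurrent G R 0 I P) (hR : ∀ a b, (R a b).PosSemidef)
    (hG : G.Preconnected) (a b : V) : P a = P b := by
  have henergy : ∑ a, ∑ b, I a b ⬝ᵥ (R a b *ᵥ I a b) = 0 := by simp [hI.tellegen hI]
  have hnonneg : ∀ a b, 0 ≤ I a b ⬝ᵥ (R a b *ᵥ I a b) := by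
    simpa using fun a b => (hR a b).dotProduct_mulVec_nonneg (I a b)
  have hzero : ∀ a b, R a b *ᵥ I a b = 0 := by
    intro a b
    have hrows := (Fintype.sum_eq_zero_iff_of_nonneg fun a => sum_nonneg fun b _ => hnonneg a b).1
      henergy
    have hab := (Fintype.sum_eq_zero_iff_of_nonneg (hnonneg a)).1 (congrFun hrows a)
    exact ((hR a b).dotProduct_mulVec_zero_iff (I a b)).1 (congrFun hab b)
  refine (hG a b).of_adj_imp (p := fun c => P a = P c) (fun c d hcd hc => ?_) rfl
  rw [hc, ← sub_eq_zero, ← hI.ohm c d hcd, hzero]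

theorem dotProduct_potential_le [DecidableEq V] {R₀ : Matrix n n ℝ} {v w : V} {x : n → ℝ}
    (hI : IsCurrent G (fun _ _ => R₀) (Pi.single v x - Pi.single w x) I P) (hR₀ : R₀.PosSemidef)
    (hG : G.Preconnected) (a : V) : x ⬝ᵥ P a ≤ x ⬝ᵥ P v := by
  classical
  refine hG.le_of_sum_sub_nonpos (φ := fun a => x ⬝ᵥ P a) (fun a hav => ?_) a
  calc ∑ b ∈ G.neighborFinset a, (x ⬝ᵥ P a - x ⬝ᵥ P b)
      = ∑ b, x ⬝ᵥ (R₀ *ᵥ I a b) := by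
        rw [SimpleGraph.neighborFinset_eq_filter, sum_filter]
        refine sum_congr rfl fun b _ => ?_
        split_ifs with hab
        · rw [hI.ohm a b hab, dotProduct_sub]
        · simp [hI.eq_zero_of_not_adj a b hab]
    _ = x ⬝ᵥ (R₀ *ᵥ (Pi.single v x - Pi.single w x : V → n → ℝ) a) := by
        rw [← dotProduct_sum, ← mulVec_sum, hI.sum_eq]
    _ ≤ 0 := by
        by_cases haw : a = w
        · subst haw
          simpa [hav, mulVec_neg] using hR₀.dotProduct_mulVec_nonneg x
        · simp [hav, haw]

end IsCurrent

theorem sum_single_sub_single_dotProduct {V n α : Type*} [Fintype V] [DecidableEq V] [Fintype n]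
    [CommRing α] (u v : V) (x : n → α) (P : V → n → α) :
    ∑ a, (Pi.single u x - Pi.single v x : V → n → α) a ⬝ᵥ P a = x ⬝ᵥ (P u - P v) := by
  have hsingle : ∀ c, ∑ a, (Pi.single c x : V → n → α) a ⬝ᵥ P a = x ⬝ᵥ P c := fun c =>
    (Fintype.sum_eq_single c fun a ha => by simp [ha]).trans (by simp)
  simp only [Pi.sub_apply, sub_dotProduct, sum_sub_distrib, hsingle, dotProduct_sub]

namespace IsEffRes

variable [DecidableEq V] {k : ℕ} {G : SimpleGraph V} {R : V → V → Matrix (Fin k) (Fin k) ℝ}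
  {u v : V} {Reff : Matrix (Fin k) (Fin k) ℝ}

theorem exists_isCurrent (h : IsEffRes G R u v Reff) (x : Fin k → ℝ) :
    ∃ I P, IsCurrent G R (Pi.single u x - Pi.single v x) I P ∧ P u - P v = Reff *ᵥ x := by
  obtain ⟨i, p, hanti, hzero, hsum, hohm, hp⟩ := h 1
  refine ⟨fun a b => i a b *ᵥ x, fun a => p a *ᵥ x,
    ⟨fun a b => ?_, fun a b hab => ?_, fun a => ?_, fun a b hab => ?_⟩, ?_⟩
  · simp [hanti a b, neg_mulVec]
  · simp [hzero a b hab]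
  · rw [← sum_mulVec, hsum a]
    simp only [sub_mulVec, Pi.sub_apply, Pi.single_apply]
    split_ifs <;> simp
  · rw [mulVec_mulVec, hohm a b hab, sub_mulVec]
  · rw [← sub_mulVec, hp, mul_one]

theorem isHermitian (h : IsEffRes G R u v Reff) (hR : ∀ a b, (R a b).IsHermitian) :
    Reff.IsHermitian := by
  have hsymm : ∀ x y, y ⬝ᵥ (Reff *ᵥ x) = x ⬝ᵥ (Reff *ᵥ y) := by
    intro x y
    obtain ⟨I, P, hI, hP⟩ := h.exists_isCurrent x
    obtain ⟨J, Q, hJ, hQ⟩ := h.exists_isCurrent y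
    simpa only [sum_single_sub_single_dotProduct, hP, hQ] using hI.reciprocity hJ hR
  refine IsHermitian.ext fun i j => ?_
  simpa using hsymm (Pi.single i 1) (Pi.single j 1)

end IsEffRes

end

/-- Triangle inequality for matrix-valued effective resistance: in a
finite connected generalized electrical network with the same symmetric positive
definite resistance R₀ on every edge, R^eff_{u,w} ≤ R^eff_{u,v} + R^eff_{v,w} in the
Loewner order. -/
theorem effRes_triangle_inequality {V : Type*} [Fintype V] [DecidableEq V] {k : ℕ}
    (G : SimpleGraph V) (hG : G.Connected)
    (R0 : Matrix (Fin k) (Fin k) ℝ) (hR0 : R0.PosDef)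
    (u v w : V) (Ruv Rvw Ruw : Matrix (Fin k) (Fin k) ℝ)
    (huv : IsEffRes G (fun _ _ => R0) u v Ruv)
    (hvw : IsEffRes G (fun _ _ => R0) v w Rvw)
    (huw : IsEffRes G (fun _ _ => R0) u w Ruw) :
    (Ruv + Rvw - Ruw).PosSemidef := by
  have hR : ∀ _ _ : V, R0.IsHermitian := fun _ _ => hR0.isHermitian
  refine .of_dotProduct_mulVec_nonneg (((huv.isHermitian hR).add (hvw.isHermitian hR)).sub
    (huw.isHermitian hR)) fun x => ?_
  obtain ⟨I₁, P₁, h₁, hP₁⟩ := huv.exists_isCurrent x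
  obtain ⟨I₂, P₂, h₂, hP₂⟩ := hvw.exists_isCurrent x
  obtain ⟨I₃, P₃, h₃, hP₃⟩ := huw.exists_isCurrent x
  have hsource : Pi.single u x - Pi.single v x + (Pi.single v x - Pi.single w x) -
      (Pi.single u x - Pi.single w x) = (0 : V → Fin k → ℝ) := by abel
  have hconst := congrArg (x ⬝ᵥ ·) <| (hsource ▸ (h₁.add h₂).sub h₃).potential_eq_of_source_eq_zero
    (fun _ _ => hR0.posSemidef) hG.preconnected u w
  have hrecip := h₁.reciprocity h₂ hR
  simp only [sum_single_sub_single_dotProduct] at hrecip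
  have hmax := h₂.dotProduct_potential_le hR0.posSemidef hG.preconnected u
  simp only [star_trivial, sub_mulVec, add_mulVec, dotProduct_add, dotProduct_sub, ← hP₁, ← hP₂,
    ← hP₃, Pi.add_apply, Pi.sub_apply] at hconst hrecip ⊢
  linarith
end

section
/- If a graph G is dense in ℝ^d with dense drawing f whose maximum uncovered diameter is γ, then there exists a positive integer h and an injective map η: ℤ^d → V(G) such that for every pair of adjacent lattice points u_z, v_z ∈ ℤ^d, d_G(η(u_z), η(v_z)) ≤ h; i.e., the lattice Z_d embeds in the h-fuzz G^{(h)}. -/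
/-!
Place a node `η z` of `G` within `γ / 2` of the lattice point `γ • z`. Distinct lattice points
are at least `γ` apart, so the balls of radius `γ / 2` around them are disjoint and `η` is
injective. Adjacent lattice points are exactly `γ` apart, so their nodes are drawn within `2γ`
of each other, and the distance ratio bounds their graph distance by `2αγ + β`.
-/

open Finset

theorem EuclideanSpace.dist_le_sum_dist {𝕜 ι : Type*} [RCLike 𝕜] [Fintype ι]
    (x y : EuclideanSpace 𝕜 ι) : dist x y ≤ ∑ i, dist (x i) (y i) := by
  rw [EuclideanSpace.dist_eq]
  refine Real.sqrt_le_iff.mpr ⟨sum_nonneg fun i _ ↦ dist_nonneg, ?_⟩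
  exact sum_sq_le_sq_sum_of_nonneg fun i _ ↦ dist_nonneg

noncomputable def scaledLattice {d : ℕ} (s : ℝ) (z : Fin d → ℤ) : EuclideanSpace ℝ (Fin d) :=
  WithLp.toLp 2 fun i ↦ s * z i

lemma dist_scaledLattice_apply {d : ℕ} (s : ℝ) (z w : Fin d → ℤ) (i : Fin d) :
    dist (scaledLattice s z i) (scaledLattice s w i) = |s| * |z i - w i| := by
  simp only [scaledLattice, PiLp.toLp_apply, Real.dist_eq, ← mul_sub, abs_mul, Int.cast_abs,
    Int.cast_sub]

lemma le_dist_scaledLattice {d : ℕ} (s : ℝ) {z w : Fin d → ℤ} (hzw : z ≠ w) :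
    |s| ≤ dist (scaledLattice s z) (scaledLattice s w) := by
  obtain ⟨i, hi⟩ := Function.ne_iff.mp hzw
  have hone : (1 : ℝ) ≤ |z i - w i| := by exact_mod_cast Int.one_le_abs (sub_ne_zero.mpr hi)
  calc |s| ≤ |s| * |z i - w i| := le_mul_of_one_le_right (abs_nonneg s) hone
    _ = dist (scaledLattice s z i) (scaledLattice s w i) := (dist_scaledLattice_apply s z w i).symm
    _ ≤ _ := PiLp.dist_apply_le _ _ i

lemma dist_scaledLattice_le_of_adj {d : ℕ} (s : ℝ) {z w : Fin d → ℤ} (hzw : (Zlat d).Adj z w) :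
    dist (scaledLattice s z) (scaledLattice s w) ≤ |s| := by
  have hsum : ∑ i, ((|z i - w i| : ℤ) : ℝ) = 1 := by exact_mod_cast hzw
  calc dist (scaledLattice s z) (scaledLattice s w)
      ≤ ∑ i, dist (scaledLattice s z i) (scaledLattice s w i) :=
        EuclideanSpace.dist_le_sum_dist _ _
    _ = |s| := by simp only [dist_scaledLattice_apply, ← mul_sum, hsum, mul_one]

lemma injective_of_dist_lt_of_separated {ι X Y : Type*} [PseudoMetricSpace X] {f : Y → X}
    {c : ι → X} {η : ι → Y} {r : ℝ} (hsep : Pairwise fun z w ↦ 2 * r ≤ dist (c z) (c w))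
    (hη : ∀ z, dist (f (η z)) (c z) < r) : Function.Injective η := by
  intro z w hzw
  by_contra hne
  have hw := hη w
  rw [← hzw] at hw
  linarith [hsep hne, hη z, dist_triangle_left (c z) (c w) (f (η z))]

theorem dense_graph_fuzz_contains_lattice_general {V : Type*} {d : ℕ}
    (G : SimpleGraph V) (f : V → EuclideanSpace ℝ (Fin d))
    (γ α β : ℝ) (hγ : 0 < γ)
    (hcov : ∀ x : EuclideanSpace ℝ (Fin d), ∃ u : V, dist (f u) x < γ / 2)
    (hα : 0 < α) (hβ : 0 < β)
    (hρ : ∀ u v : V, (G.dist u v : ℝ) ≤ α * dist (f u) (f v) + β) :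
    ∃ h : ℕ, 0 < h ∧ ∃ η : (Fin d → ℤ) → V, Function.Injective η ∧
      ∀ uz vz : Fin d → ℤ, (Zlat d).Adj uz vz → G.dist (η uz) (η vz) ≤ h := by
  choose η hη using fun z ↦ hcov (scaledLattice γ z)
  refine ⟨⌈α * (2 * γ) + β⌉₊, Nat.ceil_pos.mpr (by positivity), η, ?_, fun z w hzw ↦ ?_⟩
  · refine injective_of_dist_lt_of_separated (fun z w hne ↦ ?_) hη
    have hsep := le_dist_scaledLattice γ hne
    rw [abs_of_pos hγ] at hsep
    linarith
  have hlattice := dist_scaledLattice_le_of_adj γ hzw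
  rw [abs_of_pos hγ] at hlattice
  have hdrawn : dist (f (η z)) (f (η w)) ≤ 2 * γ := by
    have := dist_triangle4 (f (η z)) (scaledLattice γ z) (scaledLattice γ w) (f (η w))
    rw [dist_comm (scaledLattice γ w)] at this
    linarith [hη z, hη w]
  have hgraph : (G.dist (η z) (η w) : ℝ) ≤ α * (2 * γ) + β :=
    (hρ _ _).trans (by gcongr)
  exact_mod_cast hgraph.trans (Nat.le_ceil _)

/-- If G is dense in ℝ^d, with a dense drawing f (maximum uncovered
diameter γ: every open ball of diameter γ contains the image of a node, and
d_G(u,v) ≤ α‖f u − f v‖ + β), then the lattice Z_d embeds in some h-fuzz of G: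
there is an injection η : ℤ^d → V with d_G(η u_z, η v_z) ≤ h for all adjacent
lattice points u_z, v_z. -/
theorem dense_graph_fuzz_contains_lattice {V : Type*} {d : ℕ}
    (G : SimpleGraph V) (hG : G.Connected) (f : V → EuclideanSpace ℝ (Fin d))
    (γ α β : ℝ) (hγ : 0 < γ)
    (hcov : ∀ x : EuclideanSpace ℝ (Fin d), ∃ u : V, dist (f u) x < γ / 2)
    (hα : 0 < α) (hβ : 0 < β)
    (hρ : ∀ u v : V, (G.dist u v : ℝ) ≤ α * dist (f u) (f v) + β) :
    ∃ h : ℕ, 0 < h ∧ ∃ η : (Fin d → ℤ) → V, Function.Injective η ∧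
      ∀ uz vz : Fin d → ℤ, (Zlat d).Adj uz vz → G.dist (η uz) (η vz) ≤ h :=
  dense_graph_fuzz_contains_lattice_general G f γ α β hγ hcov hα hβ hρ
end

section
/- If a graph is dense in ℝ^d for some d ≥ 2, then it is not sparse in ℝ^{d'} for any d' < d. -/
/-!
Put a vertex of the dense drawing `f` near each point of a cubic grid of mesh `γ` with `n` points
per side; these `n ^ d` vertices are distinct and pairwise `O(n)` apart in `f`, hence in graph
distance. A civilized drawing `f'` is Lipschitz for the graph distance, so it sends them to
`s`-separated points in a set of diameter `O(n)`. Comparing volumes in `ℝ^{d'}` gives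
`n ^ d = O(n ^ d')`, which fails for large `n` since `d' < d`.
-/

open MeasureTheory Metric Module
open scoped Function

section Packing

variable {E : Type*} [NormedAddCommGroup E] [NormedSpace ℝ E] [FiniteDimensional ℝ E]

/-- The disjoint balls of radius `s / 2` around the points all lie in one ball of radius
`s / 2 + D`; compare volumes. -/
theorem card_mul_pow_le_of_separated {ι : Type*} [Fintype ι] {p : ι → E} {s D : ℝ}
    (hs : 0 < s) (hD : 0 ≤ D) (hsep : Pairwise fun i j => s ≤ dist (p i) (p j))
    (hdiam : ∀ i j, dist (p i) (p j) ≤ D) :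
    Fintype.card ι * (s / 2) ^ finrank ℝ E ≤ (s / 2 + D) ^ finrank ℝ E := by
  let : MeasurableSpace E := borel E
  have : BorelSpace E := ⟨rfl⟩
  rcases isEmpty_or_nonempty ι with hι | ⟨⟨i₀⟩⟩
  · simp only [Fintype.card_eq_zero, Nat.cast_zero, zero_mul]
    positivity
  let μ : Measure E := Measure.addHaar
  have hdisj : Pairwise (Disjoint on fun i => ball (p i) (s / 2)) := fun i j hij =>
    ball_disjoint_ball (by linarith [hsep hij])
  have hsub : ⋃ i, ball (p i) (s / 2) ⊆ ball (p i₀) (s / 2 + D) := by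
    refine Set.iUnion_subset fun i => ball_subset ?_
    linarith [dist_comm (p i) (p i₀) ▸ hdiam i₀ i]
  have hvol : ∑ i, μ (ball (p i) (s / 2)) ≤ μ (ball (p i₀) (s / 2 + D)) := by
    rw [← tsum_fintype (L := .unconditional _),
      ← measure_iUnion hdisj fun _ => measurableSet_ball]
    exact measure_mono hsub
  simp only [Measure.addHaar_ball_of_pos μ _ (half_pos hs),
    Measure.addHaar_ball_of_pos μ _ (by positivity : 0 < s / 2 + D), Finset.sum_const,
    Finset.card_univ, nsmul_eq_mul, ← mul_assoc] at hvol
  rw [ENNReal.mul_le_mul_iff_left (measure_ball_pos μ _ one_pos).ne' measure_ball_lt_top.ne,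
    ← ENNReal.ofReal_natCast, ← ENNReal.ofReal_mul (by positivity),
    ENNReal.ofReal_le_ofReal_iff (by positivity)] at hvol
  exact hvol

end Packing

section Grid

variable {ι : Type*} [Fintype ι] {n : ℕ}

def gridPoint (γ : ℝ) (k : ι → Fin n) : EuclideanSpace ℝ ι :=
  WithLp.toLp 2 fun i => γ * k i

theorem le_dist_gridPoint {γ : ℝ} (hγ : 0 ≤ γ) {k k' : ι → Fin n} (h : k ≠ k') :
    γ ≤ dist (gridPoint γ k) (gridPoint γ k') := by
  obtain ⟨i, hi⟩ := Function.ne_iff.mp h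
  calc γ ≤ γ * dist (k i : ℕ) (k' i : ℕ) :=
        le_mul_of_one_le_right hγ (Nat.pairwise_one_le_dist (Fin.val_injective.ne hi))
    _ = dist (gridPoint γ k i) (gridPoint γ k' i) := by
        simp only [gridPoint, Real.dist_eq, ← mul_sub, abs_mul, abs_of_nonneg hγ,
          ← Nat.dist_cast_real]
    _ ≤ dist (gridPoint γ k) (gridPoint γ k') := PiLp.dist_apply_le _ _ i

theorem norm_gridPoint_le {γ : ℝ} (hγ : 0 ≤ γ) (k : ι → Fin n) :
    ‖gridPoint γ k‖ ≤ √(Fintype.card ι) * (γ * n) := by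
  have hcoord : ∀ i, ‖gridPoint γ k i‖ ≤ γ * n := fun i => by
    simp only [gridPoint, Real.norm_eq_abs, abs_mul, abs_of_nonneg hγ, Nat.abs_cast]
    gcongr
    exact (k i).is_lt.le
  calc ‖gridPoint γ k‖ = √(∑ i, ‖gridPoint γ k i‖ ^ 2) := EuclideanSpace.norm_eq _
    _ ≤ √(∑ _i : ι, (γ * n) ^ 2) := by gcongr with i; exact hcoord i
    _ = √(Fintype.card ι) * (γ * n) := by
        rw [Finset.sum_const, Finset.card_univ, nsmul_eq_mul, Real.sqrt_mul (by positivity),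
          Real.sqrt_sq (by positivity)]

end Grid

theorem exists_injective_near_of_pairwise_le_dist {X V ι : Type*} [PseudoMetricSpace X]
    {f : V → X} {γ : ℝ} (hcov : ∀ x, ∃ u, dist (f u) x < γ / 2) {p : ι → X}
    (hp : Pairwise fun i j => γ ≤ dist (p i) (p j)) :
    ∃ w : ι → V, Function.Injective w ∧ ∀ i, dist (f (w i)) (p i) < γ / 2 := by
  choose w hw using fun i => hcov (p i)
  refine ⟨w, fun i j hij => by_contra fun hne => ?_, hw⟩
  have hi := hw i
  rw [hij] at hi
  linarith [hp hne, dist_triangle_left (p i) (p j) (f (w j)), hw j]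

theorem exists_injective_dist_le_of_forall_exists_dist_lt {V ι : Type*} [Fintype ι]
    {f : V → EuclideanSpace ℝ ι} {γ : ℝ} (hγ : 0 ≤ γ)
    (hcov : ∀ x, ∃ u, dist (f u) x < γ / 2) (n : ℕ) :
    ∃ w : (ι → Fin n) → V, Function.Injective w ∧
      ∀ k k', dist (f (w k)) (f (w k')) ≤ 2 * (√(Fintype.card ι) * (γ * n)) + γ := by
  obtain ⟨w, hw_inj, hw⟩ := exists_injective_near_of_pairwise_le_dist hcov
    fun k k' (h : k ≠ k') => le_dist_gridPoint (n := n) hγ h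
  have hnorm : ∀ k, ‖f (w k)‖ ≤ √(Fintype.card ι) * (γ * n) + γ / 2 := fun k => by
    linarith [norm_le_norm_add_norm_sub' (f (w k)) (gridPoint γ k),
      dist_eq_norm (f (w k)) (gridPoint γ k) ▸ hw k, norm_gridPoint_le hγ k]
  exact ⟨w, hw_inj, fun k k' => by
    linarith [dist_le_norm_add_norm (f (w k)) (f (w k')), hnorm k, hnorm k']⟩

namespace SimpleGraph

-- Inside this namespace `dist` is `SimpleGraph.dist`, so the metric distance is `Dist.dist`.
variable {V α : Type*} [PseudoMetricSpace α] {G : SimpleGraph V} {f : V → α} {r : ℝ}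

theorem Walk.dist_le_mul_length (hf : ∀ u v, G.Adj u v → Dist.dist (f u) (f v) ≤ r) {u v : V}
    (p : G.Walk u v) : Dist.dist (f u) (f v) ≤ r * p.length := by
  induction p with
  | nil => simp
  | @cons a b c hab p ih =>
    calc Dist.dist (f a) (f c) ≤ Dist.dist (f a) (f b) + Dist.dist (f b) (f c) :=
          dist_triangle _ _ _
      _ ≤ r + r * p.length := add_le_add (hf a b hab) ih
      _ = r * (cons hab p).length := by rw [length_cons]; push_cast; ring

theorem Connected.dist_le_mul_dist (hG : G.Connected)
    (hf : ∀ u v, G.Adj u v → Dist.dist (f u) (f v) ≤ r) (u v : V) :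
    Dist.dist (f u) (f v) ≤ r * G.dist u v := by
  obtain ⟨p, hp⟩ := hG.exists_walk_length_eq_dist u v
  exact hp ▸ p.dist_le_mul_length hf

end SimpleGraph

theorem exists_nat_affine_pow_lt {a b c : ℝ} (ha : 0 ≤ a) (hb : 0 ≤ b) (hc : 0 < c)
    {m n : ℕ} (hmn : m < n) : ∃ N : ℕ, (a * N + b) ^ m < c * N ^ n := by
  obtain ⟨N, hN⟩ := exists_nat_gt (max ((a + b) ^ m / c) 1)
  have hN1 : (1 : ℝ) ≤ N := (le_max_right _ _).trans hN.le
  have hNc : (a + b) ^ m < c * N := (div_lt_iff₀' hc).mp ((le_max_left _ _).trans_lt hN)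
  refine ⟨N, ?_⟩
  calc (a * N + b) ^ m ≤ ((a + b) * N) ^ m := by gcongr; nlinarith
    _ = (a + b) ^ m * N ^ m := mul_pow _ _ _
    _ < c * N * N ^ m := by gcongr
    _ = c * N ^ (m + 1) := by ring
    _ ≤ c * N ^ n := mul_le_mul_of_nonneg_left (pow_le_pow_right₀ hN1 hmn) hc.le

theorem dense_not_sparse_in_lower_dim_general {V : Type*} (G : SimpleGraph V)
    (hG : G.Connected) {d d' : ℕ} (hd' : d' < d)
    (hdense : ∃ f : V → EuclideanSpace ℝ (Fin d), ∃ γ : ℝ, 0 < γ ∧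
      (∀ x : EuclideanSpace ℝ (Fin d), ∃ u : V, dist (f u) x < γ / 2) ∧
      ∃ α β : ℝ, 0 < α ∧ 0 < β ∧
        ∀ u v : V, (G.dist u v : ℝ) ≤ α * dist (f u) (f v) + β) :
    ¬ ∃ f' : V → EuclideanSpace ℝ (Fin d'),
      (∃ s : ℝ, 0 < s ∧ ∀ u v : V, u ≠ v → s ≤ dist (f' u) (f' v)) ∧
      (∃ r : ℝ, ∀ u v : V, G.Adj u v → dist (f' u) (f' v) ≤ r) := by
  rintro ⟨f', ⟨s, hs, hsep⟩, ⟨r, hr⟩⟩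
  obtain ⟨f, γ, hγ, hcov, α, β, hα, hβ, hdist⟩ := hdense
  set r₀ := max r 0
  have hlip : ∀ u v, dist (f' u) (f' v) ≤ r₀ * G.dist u v :=
    hG.dist_le_mul_dist fun u v h => (hr u v h).trans (le_max_left r 0)
  obtain ⟨n, hn⟩ := exists_nat_affine_pow_lt (a := r₀ * α * 2 * √d * γ)
    (b := s / 2 + r₀ * (α * γ + β)) (c := (s / 2) ^ d') (by positivity) (by positivity)
    (by positivity) hd'
  obtain ⟨w, hw_inj, hw⟩ := exists_injective_dist_le_of_forall_exists_dist_lt hγ.le hcov n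
  rw [Fintype.card_fin] at hw
  have hdiam : ∀ k k',
      dist (f' (w k)) (f' (w k')) ≤ r₀ * (α * (2 * (√d * (γ * n)) + γ) + β) :=
    fun k k' => (hlip _ _).trans <| by gcongr; exact (hdist _ _).trans (by gcongr; exact hw k k')
  have hpack := card_mul_pow_le_of_separated (hs := hs) (p := f' ∘ w) (by positivity)
    (fun k k' h => hsep _ _ (hw_inj.ne h)) hdiam
  rw [finrank_euclideanSpace_fin, Fintype.card_fun, Fintype.card_fin, Fintype.card_fin] at hpack
  push_cast at hpack
  have hradius : s / 2 + r₀ * (α * (2 * (√d * (γ * n)) + γ) + β) =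
      r₀ * α * 2 * √d * γ * n + (s / 2 + r₀ * (α * γ + β)) := by ring
  rw [hradius, mul_comm] at hpack
  exact hpack.not_gt hn

/-- If a graph is dense in ℝ^d for some d ≥ 2 (it admits a drawing with
finite maximum uncovered diameter and positive asymptotic distance ratio), then it is
not sparse in ℝ^{d'} for any d' < d (it admits no drawing with positive minimum node
distance and finite maximum connected range). -/
theorem dense_not_sparse_in_lower_dim {V : Type*} (G : SimpleGraph V)
    (hG : G.Connected) {d d' : ℕ} (hd : 2 ≤ d) (hd' : d' < d)
    (hdense : ∃ f : V → EuclideanSpace ℝ (Fin d), ∃ γ : ℝ, 0 < γ ∧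
      (∀ x : EuclideanSpace ℝ (Fin d), ∃ u : V, dist (f u) x < γ / 2) ∧
      ∃ α β : ℝ, 0 < α ∧ 0 < β ∧
        ∀ u v : V, (G.dist u v : ℝ) ≤ α * dist (f u) (f v) + β) :
    ¬ ∃ f' : V → EuclideanSpace ℝ (Fin d'),
      (∃ s : ℝ, 0 < s ∧ ∀ u v : V, u ≠ v → s ≤ dist (f' u) (f' v)) ∧
      (∃ r : ℝ, ∀ u v : V, G.Adj u v → dist (f' u) (f' v) ≤ r) :=
  dense_not_sparse_in_lower_dim_general G hG hd' hdense
end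

section
/- Consider nodes placed at a countable set S ⊂ ℝ^d such that every open ball of diameter γ in ℝ^d contains a point of S, and form the graph G on S with an edge between every pair of points at Euclidean distance at most 2γ. Then G is connected, and moreover the identity drawing of G is dense: for all u,v ∈ S, d_G(u,v) ≤ α‖u−v‖ + β for suitable constants α, β > 0 depending only on γ. -/
/-!
Let every point of space lie within `r` of `S`, and let `2r < c`. Given `u, v ∈ S` with
`‖u - v‖ > c`, go from `u` a distance `c - r` towards `v` and take a point `p ∈ S` within `r`
of that spot: `p` is a neighbour of `u` in the graph of radius `c`, and it is closer to `v`
than `u` by more than `c - 2r`. Iterating, `u` and `v` are joined by a walk of length at most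
`‖u - v‖ / (c - 2r) + 2`; for `c = 2γ` and `r = γ / 2` this is `‖u - v‖ / γ + 2`.
-/

/-- The geometric graph on a set S of points of ℝ^d with connectivity radius c:
distinct points are adjacent whenever their Euclidean distance is at most c. -/
def geomGraph {d : ℕ} (S : Set (EuclideanSpace ℝ (Fin d))) (c : ℝ) :
    SimpleGraph S where
  Adj p q := p ≠ q ∧ dist (p : EuclideanSpace ℝ (Fin d)) q ≤ c
  symm := ⟨by
    rintro p q ⟨h1, h2⟩
    exact ⟨h1.symm, by rwa [dist_comm]⟩⟩
  loopless := ⟨fun p hp => hp.1 rfl⟩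

open SimpleGraph

section Cover

lemma pos_of_forall_exists_dist_lt {X : Type*} [PseudoMetricSpace X] [Nonempty X] {S : Set X}
    {r : ℝ} (hcov : ∀ x, ∃ p ∈ S, dist p x < r) : 0 < r := by
  obtain ⟨p, -, hp⟩ := hcov (Classical.arbitrary X)
  exact dist_nonneg.trans_lt hp

variable {E : Type*} [NormedAddCommGroup E] [NormedSpace ℝ E]

lemma exists_mem_closer_of_forall_exists_dist_lt {S : Set E} {r c : ℝ}
    (hcov : ∀ x, ∃ p ∈ S, dist p x < r) (hrc : 2 * r ≤ c) {u v : E} (huv : c ≤ dist u v) :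
    ∃ p ∈ S, p ≠ u ∧ dist u p < c ∧ dist p v < dist u v - (c - 2 * r) := by
  have hr := pos_of_forall_exists_dist_lt hcov
  have hD : 0 < dist u v := by linarith
  set t := (c - r) / dist u v
  have ht0 : 0 ≤ t := div_nonneg (by linarith) hD.le
  have ht1 : t ≤ 1 := (div_le_one hD).2 (by linarith)
  set x := AffineMap.lineMap u v t
  have hux : dist u x = c - r := by
    rw [dist_left_lineMap, Real.norm_of_nonneg ht0, div_mul_cancel₀ _ hD.ne']
  have hxv : dist x v = dist u v - (c - r) := by
    rw [dist_lineMap_right, Real.norm_of_nonneg (sub_nonneg.2 ht1), sub_mul, one_mul,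
      div_mul_cancel₀ _ hD.ne']
  obtain ⟨p, hpS, hpx⟩ := hcov x
  have hup : dist u p < c := by
    linarith [dist_triangle u x p, dist_comm p x]
  have hpu : c - 2 * r < dist u p := by
    linarith [dist_triangle u p x]
  have hpv : dist p v < dist u v - (c - 2 * r) := by
    linarith [dist_triangle p x v]
  exact ⟨p, hpS, (dist_pos.1 (by linarith)).symm, hup, hpv⟩

end Cover

section GeomGraph

variable {d : ℕ} {S : Set (EuclideanSpace ℝ (Fin d))} {r c : ℝ}

lemma geomGraph_exists_walk_length_le_succ
    (hcov : ∀ x, ∃ p ∈ S, dist p x < r) (hrc : 2 * r ≤ c) (n : ℕ) (u v : S)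
    (huv : dist (u : EuclideanSpace ℝ (Fin d)) v ≤ c + n * (c - 2 * r)) :
    ∃ w : (geomGraph S c).Walk u v, w.length ≤ n + 1 := by
  induction n generalizing u with
  | zero =>
    by_cases hne : u = v
    · subst hne
      exact ⟨.nil, by simp⟩
    · exact ⟨.cons ⟨hne, by simpa using huv⟩ .nil, le_rfl⟩
  | succ n ih =>
    by_cases hnear : dist (u : EuclideanSpace ℝ (Fin d)) v ≤ c
    · obtain ⟨w, hw⟩ :=
        ih u (hnear.trans (le_add_of_nonneg_right (mul_nonneg n.cast_nonneg (by linarith))))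
      exact ⟨w, hw.trans (by omega)⟩
    · obtain ⟨p, hpS, hpu, hup, hpv⟩ :=
        exists_mem_closer_of_forall_exists_dist_lt hcov hrc (not_le.1 hnear).le
      have hpv' : dist p (v : EuclideanSpace ℝ (Fin d)) ≤ c + n * (c - 2 * r) := by
        push_cast at huv
        linarith
      obtain ⟨w, hw⟩ := ih ⟨p, hpS⟩ hpv'
      have hadj : (geomGraph S c).Adj u ⟨p, hpS⟩ :=
        ⟨fun h => hpu (congrArg Subtype.val h).symm, hup.le⟩
      exact ⟨.cons hadj w, Nat.succ_le_succ hw⟩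

lemma geomGraph_exists_walk_length_le
    (hcov : ∀ x, ∃ p ∈ S, dist p x < r) (hrc : 2 * r < c) (u v : S) :
    ∃ w : (geomGraph S c).Walk u v,
      (w.length : ℝ) ≤ dist (u : EuclideanSpace ℝ (Fin d)) v / (c - 2 * r) + 2 := by
  have hδ : 0 < c - 2 * r := by linarith
  set n := ⌈dist (u : EuclideanSpace ℝ (Fin d)) v / (c - 2 * r)⌉₊
  have hn : (n : ℝ) < dist (u : EuclideanSpace ℝ (Fin d)) v / (c - 2 * r) + 1 :=
    Nat.ceil_lt_add_one (div_nonneg dist_nonneg hδ.le)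
  have hdist : dist (u : EuclideanSpace ℝ (Fin d)) v ≤ c + n * (c - 2 * r) := by
    have := (div_le_iff₀ hδ).1 (Nat.le_ceil _ : _ ≤ (n : ℝ))
    linarith [pos_of_forall_exists_dist_lt hcov]
  obtain ⟨w, hw⟩ := geomGraph_exists_walk_length_le_succ hcov hrc.le n u v hdist
  refine ⟨w, ?_⟩
  have : (w.length : ℝ) ≤ n + 1 := by exact_mod_cast hw
  linarith

lemma geomGraph_connected (hcov : ∀ x, ∃ p ∈ S, dist p x < r) (hrc : 2 * r < c) :
    (geomGraph S c).Connected := by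
  obtain ⟨p, hpS, -⟩ := hcov 0
  refine (connected_iff _).2 ⟨fun u v => ?_, ⟨⟨p, hpS⟩⟩⟩
  obtain ⟨w, -⟩ := geomGraph_exists_walk_length_le hcov hrc u v
  exact w.reachable

lemma geomGraph_dist_le (hcov : ∀ x, ∃ p ∈ S, dist p x < r) (hrc : 2 * r < c) (u v : S) :
    ((geomGraph S c).dist u v : ℝ) ≤
      dist (u : EuclideanSpace ℝ (Fin d)) v / (c - 2 * r) + 2 := by
  obtain ⟨w, hw⟩ := geomGraph_exists_walk_length_le hcov hrc u v
  exact (Nat.cast_le.2 (dist_le w)).trans hw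

end GeomGraph

theorem geomGraph_connected_and_dense_general {d : ℕ}
    (S : Set (EuclideanSpace ℝ (Fin d)))
    (γ : ℝ) (hγ : 0 < γ)
    (hcov : ∀ x : EuclideanSpace ℝ (Fin d), ∃ p ∈ S, dist p x < γ / 2) :
    (geomGraph S (2 * γ)).Connected ∧
    ∃ α β : ℝ, 0 < α ∧ 0 < β ∧ ∀ u v : S,
      ((geomGraph S (2 * γ)).dist u v : ℝ) ≤
        α * dist (u : EuclideanSpace ℝ (Fin d)) v + β := by
  have hrc : 2 * (γ / 2) < 2 * γ := by linarith
  have hδ : 2 * γ - 2 * (γ / 2) = γ := by ring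
  refine ⟨geomGraph_connected hcov hrc, γ⁻¹, 2, inv_pos.2 hγ, two_pos, fun u v => ?_⟩
  have := geomGraph_dist_le hcov hrc u v
  rwa [hδ, div_eq_inv_mul] at this

/-- If a countable set S ⊂ ℝ^d has maximum uncovered diameter at most γ
(every open ball of diameter γ meets S), then the geometric graph on S with
connectivity radius 2γ is connected, and its identity drawing is dense:
d_G(u,v) ≤ α‖u−v‖ + β for suitable constants α, β > 0. -/
theorem geomGraph_connected_and_dense {d : ℕ}
    (S : Set (EuclideanSpace ℝ (Fin d))) (hS : S.Countable)
    (γ : ℝ) (hγ : 0 < γ)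
    (hcov : ∀ x : EuclideanSpace ℝ (Fin d), ∃ p ∈ S, dist p x < γ / 2) :
    (geomGraph S (2 * γ)).Connected ∧
    ∃ α β : ℝ, 0 < α ∧ 0 < β ∧ ∀ u v : S,
      ((geomGraph S (2 * γ)).dist u v : ℝ) ≤
        α * dist (u : EuclideanSpace ℝ (Fin d)) v + β :=
  geomGraph_connected_and_dense_general S γ hγ hcov
end
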